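/- Let $\mathcal N$ denote the standard normal CDF, $c_1 > 0$, $\lambda > 0$ with $c_1^2 < 2\lambda$, and $t < T$. Then $\lambda e^{\lambda t}\int_t^T \mathcal N(c_1\sqrt{T-u}) e^{-\lambda u}\, du = \mathcal N(c_1\sqrt{T-t}) - e^{-\lambda(T-t)}\Big[\frac 12 + \frac{c_1}{\sqrt{2\lambda - c_1^2}} \int_0^{\sqrt{(2\lambda - c_1^2)(T-t)}} \frac{e^{z^2/2}}{\sqrt{2\pi}}\, dz\Big].$ -/

import Mathlib

/-!
With `s = T - u` and `a = 2λ - c₁²`, the function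
`F u = c₁ / √a · e^{-λT} ∫₀^{√(a s)} e^{z²/2} / √(2π) dz - e^{-λu} 𝒩(c₁ √s)`
is an antiderivative of `λ 𝒩(c₁ √(T - u)) e^{-λu}` on `(t, T)`: differentiating, the two
Gaussian-type terms cancel since `e^{-λu} e^{-c₁² s / 2} = e^{-λT} e^{a s / 2}`. The theorem is
the fundamental theorem of calculus for `F`, with `𝒩(0) = 1/2` evaluating `F T`.
-/

/-- The standard normal cumulative distribution function. -/
noncomputable def stdNormalCDF (x : ℝ) : ℝ :=
  ∫ z in Set.Iic x, Real.exp (-z ^ 2 / 2) / Real.sqrt (2 * Real.pi)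

open Real MeasureTheory Set intervalIntegral

noncomputable def stdNormalPDF (z : ℝ) : ℝ :=
  exp (-z ^ 2 / 2) / √(2 * π)

lemma stdNormalPDF_eq_gaussianPDFReal :
    stdNormalPDF = ProbabilityTheory.gaussianPDFReal 0 1 := by
  ext z
  simp [stdNormalPDF, ProbabilityTheory.gaussianPDFReal, div_eq_inv_mul]

lemma continuous_stdNormalPDF : Continuous stdNormalPDF := by
  unfold stdNormalPDF
  fun_prop

lemma integrable_stdNormalPDF : Integrable stdNormalPDF :=
  stdNormalPDF_eq_gaussianPDFReal ▸ ProbabilityTheory.integrable_gaussianPDFReal 0 1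

lemma integral_stdNormalPDF : ∫ z, stdNormalPDF z = 1 :=
  stdNormalPDF_eq_gaussianPDFReal ▸
    ProbabilityTheory.integral_gaussianPDFReal_eq_one 0 one_ne_zero

lemma stdNormalCDF_sub_stdNormalCDF (a b : ℝ) :
    stdNormalCDF b - stdNormalCDF a = ∫ z in a..b, stdNormalPDF z :=
  integral_Iic_sub_Iic integrable_stdNormalPDF.integrableOn integrable_stdNormalPDF.integrableOn

lemma hasDerivAt_stdNormalCDF (x : ℝ) : HasDerivAt stdNormalCDF (stdNormalPDF x) x := by
  have h := (integral_hasDerivAt_right (a := 0) (continuous_stdNormalPDF.intervalIntegrable 0 x)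
    (continuous_stdNormalPDF.stronglyMeasurableAtFilter _ _)
    continuous_stdNormalPDF.continuousAt).const_add (stdNormalCDF 0)
  refine h.congr_of_eventuallyEq (Filter.Eventually.of_forall fun y => ?_)
  dsimp only
  rw [← stdNormalCDF_sub_stdNormalCDF, add_sub_cancel]

lemma continuous_stdNormalCDF : Continuous stdNormalCDF :=
  continuous_iff_continuousAt.mpr fun x => (hasDerivAt_stdNormalCDF x).continuousAt

lemma stdNormalCDF_zero : stdNormalCDF 0 = 1 / 2 := by
  have hsymm : ∫ z in Ioi 0, stdNormalPDF z = stdNormalCDF 0 := by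
    rw [← neg_zero, ← integral_comp_neg_Iic]
    simp [stdNormalPDF, stdNormalCDF]
  have hsplit := integral_Iic_add_Ioi (b := 0) integrable_stdNormalPDF.integrableOn
    integrable_stdNormalPDF.integrableOn
  rw [integral_stdNormalPDF, hsymm] at hsplit
  change stdNormalCDF 0 + stdNormalCDF 0 = 1 at hsplit
  linarith

lemma hasDerivAt_stdNormalCDF_mul_sqrt (c : ℝ) {s : ℝ} (hs : 0 < s) :
    HasDerivAt (fun s => stdNormalCDF (c * √s))
      (c * exp (-(c ^ 2 * s) / 2) / (2 * √(2 * π) * √s)) s := by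
  refine ((hasDerivAt_stdNormalCDF _).comp s
    ((hasDerivAt_sqrt hs.ne').const_mul c)).congr_deriv ?_
  unfold stdNormalPDF
  rw [mul_pow, sq_sqrt hs.le]
  field_simp

lemma hasDerivAt_integral_exp_sq_half_sqrt {a s : ℝ} (ha : 0 < a) (hs : 0 < s) :
    HasDerivAt (fun s => ∫ z in (0 : ℝ)..√(a * s), exp (z ^ 2 / 2) / √(2 * π))
      (√a * exp (a * s / 2) / (2 * √(2 * π) * √s)) s := by
  have hcont : Continuous fun z : ℝ => exp (z ^ 2 / 2) / √(2 * π) := by fun_prop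
  have hint := integral_hasDerivAt_right (a := 0) (hcont.intervalIntegrable 0 √(a * s))
    (hcont.stronglyMeasurableAtFilter _ _) hcont.continuousAt
  refine (hint.comp s ((hasDerivAt_sqrt (mul_pos ha hs).ne').comp s
    ((hasDerivAt_id s).const_mul a))).congr_deriv ?_
  rw [sq_sqrt (mul_pos ha hs).le, sqrt_mul ha.le]
  field_simp
  exact (sq_sqrt ha.le).symm

lemma hasDerivAt_antideriv_stdNormalCDF_mul_exp {c l T u : ℝ} (hcl : c ^ 2 < 2 * l)
    (hu : u < T) :
    HasDerivAt (fun u => c / √(2 * l - c ^ 2) * exp (-l * T) *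
        (∫ z in (0 : ℝ)..√((2 * l - c ^ 2) * (T - u)), exp (z ^ 2 / 2) / √(2 * π))
        - exp (-l * u) * stdNormalCDF (c * √(T - u)))
      (l * (stdNormalCDF (c * √(T - u)) * exp (-l * u))) u := by
  set a := 2 * l - c ^ 2 with ha_def
  have ha : 0 < a := sub_pos.2 hcl
  have hs : 0 < T - u := sub_pos.2 hu
  have hTu : HasDerivAt (fun u => T - u) (-1) u := by
    simpa using (hasDerivAt_id u).const_sub T
  have hI := ((hasDerivAt_integral_exp_sq_half_sqrt ha hs).comp u hTu).const_mul
    (c / √a * exp (-l * T))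
  have hN := (hasDerivAt_stdNormalCDF_mul_sqrt c hs).comp u hTu
  have hE : HasDerivAt (fun u => exp (-l * u)) (exp (-l * u) * -l) u := by
    simpa using ((hasDerivAt_id u).const_mul (-l)).exp
  refine (hI.sub (hE.mul hN)).congr_deriv ?_
  have hexp : exp (-l * T) * exp (a * (T - u) / 2) =
      exp (-l * u) * exp (-(c ^ 2 * (T - u)) / 2) := by
    rw [← exp_add, ← exp_add, ha_def]
    ring_nf
  have hsa : √a ≠ 0 := (sqrt_pos.2 ha).ne'
  have hcancel :
      c / √a * exp (-l * T) * (√a * exp (a * (T - u) / 2) / (2 * √(2 * π) * √(T - u)) * -1)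
        = -(c / (2 * √(2 * π) * √(T - u))) * (exp (-l * T) * exp (a * (T - u) / 2)) := by
    field_simp
  rw [hcancel, hexp, Function.comp_apply]
  ring

theorem A1_case_lt_general (c₁ l t T : ℝ)
    (hcase : c₁ ^ 2 < 2 * l) (htT : t < T) :
    l * Real.exp (l * t) *
        ∫ u in t..T, stdNormalCDF (c₁ * Real.sqrt (T - u)) * Real.exp (-l * u)
      = stdNormalCDF (c₁ * Real.sqrt (T - t))
        - Real.exp (-l * (T - t)) * (1 / 2 + c₁ / Real.sqrt (2 * l - c₁ ^ 2)
            * ∫ z in (0:ℝ)..Real.sqrt ((2 * l - c₁ ^ 2) * (T - t)),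
                Real.exp (z ^ 2 / 2) / Real.sqrt (2 * Real.pi)) := by
  have hN : Continuous fun u => stdNormalCDF (c₁ * √(T - u)) :=
    continuous_stdNormalCDF.comp (by fun_prop)
  have hI : Continuous fun y => ∫ z in (0 : ℝ)..y, exp (z ^ 2 / 2) / √(2 * π) :=
    continuous_primitive (fun _ _ => Continuous.intervalIntegrable (by fun_prop) _ _) 0
  have hF : Continuous fun u => c₁ / √(2 * l - c₁ ^ 2) * exp (-l * T) *
      (∫ z in (0 : ℝ)..√((2 * l - c₁ ^ 2) * (T - u)), exp (z ^ 2 / 2) / √(2 * π))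
      - exp (-l * u) * stdNormalCDF (c₁ * √(T - u)) := by
    fun_prop
  have hFTC := integral_eq_sub_of_hasDerivAt_of_le htT.le hF.continuousOn
    (fun u hu => hasDerivAt_antideriv_stdNormalCDF_mul_exp hcase hu.2)
    ((continuous_const.mul (hN.mul (by fun_prop))).intervalIntegrable t T)
  simp only [intervalIntegral.integral_const_mul, sub_self, mul_zero, sqrt_zero, integral_same,
    stdNormalCDF_zero] at hFTC
  have hexp_t : exp (l * t) * exp (-l * t) = 1 := by rw [← exp_add]; simp
  have hexp_T : exp (l * t) * exp (-l * T) = exp (-l * (T - t)) := by rw [← exp_add]; ring_nf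
  linear_combination exp (l * t) * hFTC + stdNormalCDF (c₁ * √(T - t)) * hexp_t
    - (1 / 2 + c₁ / √(2 * l - c₁ ^ 2) *
      ∫ z in (0 : ℝ)..√((2 * l - c₁ ^ 2) * (T - t)), exp (z ^ 2 / 2) / √(2 * π)) * hexp_T

/-- Explicit value of `A₁(t,T)` in the case `c₁² < 2λ`. -/
theorem A1_case_lt (c₁ l t T : ℝ) (hc₁ : 0 < c₁) (hl : 0 < l)
    (hcase : c₁ ^ 2 < 2 * l) (htT : t < T) :
    l * Real.exp (l * t) *
        ∫ u in t..T, stdNormalCDF (c₁ * Real.sqrt (T - u)) * Real.exp (-l * u)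
      = stdNormalCDF (c₁ * Real.sqrt (T - t))
        - Real.exp (-l * (T - t)) * (1 / 2 + c₁ / Real.sqrt (2 * l - c₁ ^ 2)
            * ∫ z in (0:ℝ)..Real.sqrt ((2 * l - c₁ ^ 2) * (T - t)),
                Real.exp (z ^ 2 / 2) / Real.sqrt (2 * Real.pi)) :=
  A1_case_lt_general c₁ l t T hcase htT
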